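/- Let N ≥ 2 and I ⊆ {1,…,N−1}. Then the N−1 vectors { f_j : j ∈ {1,…,N−1}, j ∉ I } ∪ { e_i : i ∈ I } form a basis of the hyperplane 𝔥 = { x ∈ ℝ^N : x₁ + ⋯ + x_N = 0 }. -/

import Mathlib

/-! The vectors `e_i` and `f_k` are biorthogonal for the standard dot product: `e_i ⬝ f_k = δ_ik`.
For biorthogonal families `a, b`, a relation `∑_{i ∈ I} c_i a_i + ∑_{i ∉ I} c_i b_i = 0` makes
`w = ∑_{i ∈ I} c_i a_i` orthogonal to `-w`, so `w = 0`; pairing `w` with `b_t` and the other sum with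
`a_t` then recovers each coefficient as `0`. All the vectors lie in `𝔥`, which has dimension `N - 1`,
so `N - 1` independent ones span it. -/

open BigOperators

/-- The simple-root vector `f_{k+1}` (1-based index `k+1`, `k : Fin (N-1)`):
coordinate `1` at position `k`, `-1` at position `k+1` (0-based), `0` elsewhere. -/
def fvec (N : ℕ) (k : Fin (N - 1)) : Fin N → ℝ := fun j =>
  if (j : ℕ) = (k : ℕ) then 1 else if (j : ℕ) = (k : ℕ) + 1 then -1 else 0

/-- The coweight vector `e_{k+1}` (1-based index `m = k+1`, `k : Fin (N-1)`): the first `m`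
coordinates equal `(N - m)/N` and the remaining `N - m` coordinates equal `-m/N`. -/
noncomputable def evec (N : ℕ) (k : Fin (N - 1)) : Fin N → ℝ := fun j =>
  if (j : ℕ) < (k : ℕ) + 1 then ((N : ℝ) - ((k : ℕ) + 1)) / N else -(((k : ℕ) + 1 : ℕ) : ℝ) / N

/-- Summing the coordinates, as a linear map `(Fin N → ℝ) →ₗ[ℝ] ℝ`. -/
def sumLM (N : ℕ) : (Fin N → ℝ) →ₗ[ℝ] ℝ where
  toFun x := ∑ j, x j
  map_add' x y := by simp [Finset.sum_add_distrib]
  map_smul' c x := by simp [Finset.mul_sum]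

open Finset

section Biorthogonal

variable {ι n R : Type*} [Fintype ι] [DecidableEq ι] [Fintype n]
  [CommRing R] [LinearOrder R] [IsStrictOrderedRing R]

theorem linearIndependent_ite_of_dotProduct_eq_ite {a b : ι → n → R}
    (hab : ∀ i j, a i ⬝ᵥ b j = if i = j then 1 else 0) (s : Finset ι) :
    LinearIndependent R fun i => if i ∈ s then a i else b i := by
  rw [Fintype.linearIndependent_iff]
  intro c hc
  set w := ∑ i ∈ s, c i • a i
  set u := ∑ i ∈ sᶜ, c i • b i
  have hwu : w + u = 0 := by
    rw [← hc, ← sum_add_sum_compl s]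
    congr 1 <;> refine sum_congr rfl fun i hi => ?_
    · rw [if_pos hi]
    · rw [if_neg (mem_compl.mp hi)]
  have hw_b (t : ι) : w ⬝ᵥ b t = if t ∈ s then c t else 0 := by
    simp [w, sum_dotProduct, smul_dotProduct, hab]
  have ha_u (t : ι) : a t ⬝ᵥ u = if t ∈ sᶜ then c t else 0 := by
    simp [u, dotProduct_sum, dotProduct_smul, hab]
  have hw_u : w ⬝ᵥ u = 0 := by
    simp only [u, dotProduct_sum, dotProduct_smul, hw_b]
    exact sum_eq_zero fun i hi => by rw [if_neg (mem_compl.mp hi), smul_zero]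
  have hw : w = 0 := dotProduct_self_eq_zero.mp <| calc
    w ⬝ᵥ w = -(w ⬝ᵥ u) := by rw [← dotProduct_neg, ← eq_neg_of_add_eq_zero_left hwu]
    _ = 0 := by rw [hw_u, neg_zero]
  have hu : u = 0 := by rwa [hw, zero_add] at hwu
  intro t
  by_cases ht : t ∈ s
  · simpa [ht, hw] using (hw_b t).symm
  · simpa [ht, hu] using (ha_u t).symm

end Biorthogonal

theorem sumLM_apply (N : ℕ) (x : Fin N → ℝ) : sumLM N x = ∑ j, x j := rfl

theorem finrank_ker_sumLM (N : ℕ) : Module.finrank ℝ (LinearMap.ker (sumLM N)) = N - 1 := by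
  cases N with
  | zero => exact Module.finrank_zero_of_subsingleton
  | succ N =>
    have hsurj : Function.Surjective (sumLM (N + 1)) := fun c =>
      ⟨Pi.single 0 c, by simp [sumLM_apply]⟩
    have h := LinearMap.finrank_range_add_finrank_ker (sumLM (N + 1))
    rw [LinearMap.range_eq_top.mpr hsurj, finrank_top, Module.finrank_self,
      Module.finrank_fin_fun] at h
    omega

section Vectors

variable {N : ℕ}

theorem fvec_eq_single_sub_single (k : Fin (N - 1)) :
    fvec N k = Pi.single ⟨k, by omega⟩ 1 - Pi.single ⟨k + 1, by omega⟩ 1 := by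
  ext j
  simp only [fvec, Pi.sub_apply, Pi.single_apply, Fin.ext_iff]
  split_ifs <;> first | omega | norm_num

theorem dotProduct_fvec (x : Fin N → ℝ) (k : Fin (N - 1)) :
    x ⬝ᵥ fvec N k = x ⟨k, by omega⟩ - x ⟨k + 1, by omega⟩ := by
  rw [fvec_eq_single_sub_single, dotProduct_sub, dotProduct_single, dotProduct_single,
    mul_one, mul_one]

theorem evec_dotProduct_fvec (i k : Fin (N - 1)) :
    evec N i ⬝ᵥ fvec N k = if i = k then 1 else 0 := by
  have hN : (N : ℝ) ≠ 0 := Nat.cast_ne_zero.mpr (by have := i.2; omega)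
  rw [dotProduct_fvec]
  simp only [evec, Fin.ext_iff]
  rcases lt_trichotomy (i : ℕ) k with h | h | h
  · rw [if_neg (by omega), if_neg (by omega), if_neg (by omega)]; ring
  · rw [if_pos (by omega), if_neg (by omega), if_pos h]
    field_simp
    push_cast
    ring
  · rw [if_pos (by omega), if_pos (by omega), if_neg (by omega)]; ring

theorem sumLM_fvec (k : Fin (N - 1)) : sumLM N (fvec N k) = 0 := by
  simp [sumLM_apply, fvec_eq_single_sub_single, sum_sub_distrib]

theorem sumLM_evec (k : Fin (N - 1)) : sumLM N (evec N k) = 0 := by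
  have hN : (N : ℝ) ≠ 0 := Nat.cast_ne_zero.mpr (by have := k.2; omega)
  rw [sumLM_apply]
  simp only [evec, sum_ite, sum_const, nsmul_eq_mul]
  have hlt : #{j : Fin N | (j : ℕ) < k + 1} = k + 1 := by
    rw [Fin.card_filter_val_lt]; omega
  have hge : #{j : Fin N | ¬(j : ℕ) < k + 1} = N - (k + 1) := by
    have := card_filter_add_card_filter_not (s := univ) (fun j : Fin N => (j : ℕ) < k + 1)
    rw [card_univ, Fintype.card_fin, hlt] at this
    omega
  rw [hlt, hge, Nat.cast_sub (by omega)]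
  field_simp
  push_cast
  ring

end Vectors

theorem stmt11_general (N : ℕ) (I : Finset (Fin (N - 1))) :
    (∀ k : Fin (N - 1), (if k ∈ I then evec N k else fvec N k) ∈ LinearMap.ker (sumLM N)) ∧
    LinearIndependent ℝ (fun k : Fin (N - 1) => if k ∈ I then evec N k else fvec N k) ∧
    Submodule.span ℝ (Set.range fun k : Fin (N - 1) => if k ∈ I then evec N k else fvec N k) =
      LinearMap.ker (sumLM N) := by
  have hker (k : Fin (N - 1)) :
      (if k ∈ I then evec N k else fvec N k) ∈ LinearMap.ker (sumLM N) := by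
    split_ifs
    · exact sumLM_evec k
    · exact sumLM_fvec k
  have hli := linearIndependent_ite_of_dotProduct_eq_ite evec_dotProduct_fvec I
  refine ⟨hker, hli, Submodule.eq_of_le_of_finrank_eq ?_ ?_⟩
  · exact Submodule.span_le.mpr (Set.range_subset_iff.mpr hker)
  · rw [finrank_span_eq_card hli, finrank_ker_sumLM, Fintype.card_fin]

/-- For any `I ⊆ {1,…,N-1}`, the vectors `{f_j : j ∉ I} ∪ {e_i : i ∈ I}` form a basis of
the hyperplane `𝔥 = {x ∈ ℝᴺ : x₁ + ⋯ + x_N = 0}`. -/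
theorem stmt11 (N : ℕ) (hN : 2 ≤ N) (I : Finset (Fin (N - 1))) :
    (∀ k : Fin (N - 1), (if k ∈ I then evec N k else fvec N k) ∈ LinearMap.ker (sumLM N)) ∧
    LinearIndependent ℝ (fun k : Fin (N - 1) => if k ∈ I then evec N k else fvec N k) ∧
    Submodule.span ℝ (Set.range fun k : Fin (N - 1) => if k ∈ I then evec N k else fvec N k) =
      LinearMap.ker (sumLM N) :=
  stmt11_general N I
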